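/- There exists a sequence ⟨T_i : i < ω₁⟩ of pairwise disjoint stationary subsets of ω₁ with ⋃_{i<ω₁} T_i = ω₁ (i.e., ω₁ can be partitioned into ω₁-many pairwise disjoint stationary sets). -/

import Mathlib

noncomputable section
open Set Ordinal Cardinal

/-- The first uncountable ordinal. -/
def omega1 : Ordinal := (Cardinal.aleph 1).ord

/-- `C` is a club (closed unbounded) subset of the ordinal `ρ`. -/
def IsClubIn (C : Set Ordinal) (ρ : Ordinal) : Prop :=
  C ⊆ Set.Iio ρ ∧
  (∀ α, α < ρ → 0 < α → (∀ β < α, ∃ γ ∈ C, β < γ ∧ γ < α) → α ∈ C) ∧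
  (∀ α, α < ρ → ∃ β ∈ C, α < β)

/-- `A` is stationary in the ordinal `ρ`: it meets every club in `ρ`. -/
def IsStatIn (A : Set Ordinal) (ρ : Ordinal) : Prop :=
  ∀ C, IsClubIn C ρ → (A ∩ C).Nonempty

lemma omega1_pos : 0 < omega1 := by
  rw [omega1, Cardinal.lt_ord]
  simpa using aleph0_lt_aleph_one.trans_le' aleph0_pos.le

lemma omega1_isLimit : Order.IsSuccLimit omega1 :=
  Cardinal.isSuccLimit_ord (aleph0_le_aleph 1)

lemma cof_omega1 : omega1.cof = Cardinal.aleph 1 :=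
  Cardinal.isRegular_aleph_one.cof_eq

lemma iSup_lt_omega1 (y : ℕ → Ordinal) (hy : ∀ k, y k < omega1) :
    (⨆ k, y k) < omega1 := by
  apply Ordinal.iSup_lt_ord_lift _ hy
  rw [cof_omega1, Cardinal.mk_denumerable, Cardinal.lift_aleph0]
  exact aleph0_lt_aleph_one

/-- `Ioo a ω₁` is a club in `ω₁`. -/
lemma isClubIn_Ioo {a : Ordinal} (ha : a < omega1) : IsClubIn (Ioo a omega1) omega1 := by
  refine ⟨fun x hx => hx.2, ?_, ?_⟩
  · intro α hα hα0 h
    obtain ⟨γ, hγ, _, hγα⟩ := h 0 hα0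
    exact ⟨hγ.1.trans hγα, hα⟩
  · intro α hα
    refine ⟨max a α + 1, ⟨?_, ?_⟩, ?_⟩
    · rw [Ordinal.add_one_eq_succ]
      exact (le_max_left a α).trans_lt (Order.lt_succ _)
    · exact omega1_isLimit.succ_lt (max_lt ha hα)
    · rw [Ordinal.add_one_eq_succ]
      exact (le_max_right a α).trans_lt (Order.lt_succ _)

/-- Countable intersections of clubs in `ω₁` are clubs. -/
lemma isClubIn_iInter {C : ℕ → Set Ordinal} (h : ∀ n, IsClubIn (C n) omega1) :
    IsClubIn (⋂ n, C n) omega1 := by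
  -- a choice function giving, above each point, a member of `C n`
  have hnxt : ∀ n : ℕ, ∀ x : Ordinal, x < omega1 → ∃ γ, γ ∈ C n ∧ x < γ := by
    intro n x hx
    obtain ⟨γ, h1, h2⟩ := (h n).2.2 x hx
    exact ⟨γ, h1, h2⟩
  choose nxt hnxt1 hnxt2 using hnxt
  have key : ∀ α, α < omega1 → ∃ lam ∈ ⋂ n, C n, α < lam := by
    intro α hα
    set y : ℕ → Ordinal := fun k => Nat.rec α
      (fun k yk => max (yk + 1)
        ((Finset.range (k + 1)).sup fun n => if h : yk < omega1 then nxt n yk h else 0)) k with hy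
    have hy0 : y 0 = α := rfl
    have hysucc : ∀ k, y (k + 1) = max (y k + 1)
        ((Finset.range (k + 1)).sup fun n => if h : y k < omega1 then nxt n (y k) h else 0) :=
      fun k => rfl
    have hylt : ∀ k, y k < omega1 := by
      intro k
      induction k with
      | zero => exact hα
      | succ k ih =>
        rw [hysucc]
        apply max_lt (omega1_isLimit.succ_lt ih)
        rw [Finset.sup_lt_iff omega1_pos]
        intro n _
        rw [dif_pos ih]
        exact (h n).1 (hnxt1 n (y k) ih)
    have hmono : StrictMono y := by
      apply strictMono_nat_of_lt_succ
      intro k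
      rw [hysucc]
      have : y k < y k + 1 := by
        rw [Ordinal.add_one_eq_succ]; exact Order.lt_succ _
      exact this.trans_le (le_max_left _ _)
    set lam := ⨆ k, y k with hlam
    have hlamlt : lam < omega1 := iSup_lt_omega1 y hylt
    have hle : ∀ k, y k ≤ lam := fun k => le_ciSup (Ordinal.bddAbove_range y) k
    have hstep : ∀ n k, n ≤ k → ∃ γ ∈ C n, y k < γ ∧ γ < lam := by
      intro n k hnk
      refine ⟨nxt n (y k) (hylt k), hnxt1 _ _ _, hnxt2 _ _ _, ?_⟩
      calc nxt n (y k) (hylt k)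
          = (if h : y k < omega1 then nxt n (y k) h else 0) := (dif_pos (hylt k)).symm
        _ ≤ (Finset.range (k + 1)).sup
              (fun n => if h : y k < omega1 then nxt n (y k) h else 0) :=
            Finset.le_sup (f := fun n => if h : y k < omega1 then nxt n (y k) h else 0)
              (Finset.mem_range.mpr (Nat.lt_succ_of_le hnk))
        _ ≤ y (k + 1) := by rw [hysucc]; exact le_max_right _ _
        _ < y (k + 2) := hmono (Nat.lt_succ_self (k+1))
        _ ≤ lam := hle (k + 2)
    have hmem : lam ∈ ⋂ n, C n := by
      refine mem_iInter.mpr fun n => ?_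
      apply (h n).2.1 lam hlamlt
      · calc 0 ≤ y 0 := zero_le
          _ < y 1 := hmono Nat.zero_lt_one
          _ ≤ lam := hle 1
      · intro β hβ
        obtain ⟨k, hk⟩ := (lt_ciSup_iff (Ordinal.bddAbove_range y)).mp hβ
        obtain ⟨γ, hγ1, hγ2, hγ3⟩ := hstep n (max n k) (le_max_left n k)
        exact ⟨γ, hγ1, hk.trans_le ((hmono.monotone (le_max_right n k)).trans hγ2.le), hγ3⟩
    refine ⟨lam, hmem, ?_⟩
    calc α = y 0 := hy0.symm
      _ < y 1 := hmono Nat.zero_lt_one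
      _ ≤ lam := hle 1
  refine ⟨fun x hx => (h 0).1 (mem_iInter.mp hx 0), ?_, ?_⟩
  · intro α hα hα0 hcl
    refine mem_iInter.mpr fun n => (h n).2.1 α hα hα0 fun β hβ => ?_
    obtain ⟨γ, hγ, h1, h2⟩ := hcl β hβ
    exact ⟨γ, mem_iInter.mp hγ n, h1, h2⟩
  · intro α hα
    obtain ⟨lam, h1, h2⟩ := key α hα
    exact ⟨lam, h1, h2⟩

lemma isStatIn_mono {A B : Set Ordinal} {ρ : Ordinal} (hAB : A ⊆ B)
    (hA : IsStatIn A ρ) : IsStatIn B ρ := fun C hC => by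
  obtain ⟨x, hx1, hx2⟩ := hA C hC
  exact ⟨x, hAB hx1, hx2⟩

/-- Every proper initial segment of `ω₁` injects into `ℕ`. -/
lemma exists_inj_nat {β : Ordinal} (hβ : β < omega1) :
    ∃ f : Ordinal → ℕ, ∀ a a', a < β → a' < β → f a = f a' → a = a' := by
  have hcard : β.card < ℵ₁ := Cardinal.lt_ord.mp hβ
  rw [← Cardinal.succ_aleph0, Order.lt_succ_iff] at hcard
  have hmk : #(Iio β : Set Ordinal) ≤ ℵ₀ := by
    rw [Ordinal.mk_Iio_ordinal]
    calc Cardinal.lift β.card ≤ Cardinal.lift ℵ₀ := Cardinal.lift_le.mpr hcard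
      _ = ℵ₀ := Cardinal.lift_aleph0
  have : Countable (Iio β : Set Ordinal) := Cardinal.mk_le_aleph0_iff.mp hmk
  obtain ⟨g, hg⟩ := Countable.exists_injective_nat (Iio β : Set Ordinal)
  refine ⟨fun a => if h : a < β then g ⟨a, h⟩ else 0, fun a a' ha ha' heq => ?_⟩
  dsimp only at heq
  rw [dif_pos ha, dif_pos ha'] at heq
  have := hg heq
  exact congrArg Subtype.val this

/-- A global choice of such injections. -/
def Ffun : Ordinal → Ordinal → ℕ :=
  fun β => if h : β < omega1 then (exists_inj_nat h).choose else fun _ => 0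

lemma Ffun_inj {β : Ordinal} (hβ : β < omega1) {a a' : Ordinal}
    (ha : a < β) (ha' : a' < β) (h : Ffun β a = Ffun β a') : a = a' := by
  rw [Ffun, dif_pos hβ] at h
  exact (exists_inj_nat hβ).choose_spec a a' ha ha' h

/-- The Ulam matrix. -/
def UM (n : ℕ) (α : Ordinal) : Set Ordinal :=
  {β | α < β ∧ β < omega1 ∧ Ffun β α = n}

lemma UM_disjoint {n : ℕ} {α α' : Ordinal} (h : α ≠ α') : Disjoint (UM n α) (UM n α') := by
  rw [Set.disjoint_left]
  rintro β ⟨h1, h2, h3⟩ ⟨h1', _, h3'⟩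
  exact h (Ffun_inj h2 h1 h1' (h3.trans h3'.symm))

/-- For each `α < ω₁`, some row of the Ulam matrix is stationary. -/
lemma exists_stat_row {α : Ordinal} (hα : α < omega1) :
    ∃ n : ℕ, IsStatIn (UM n α) omega1 := by
  by_contra hcon
  push_neg at hcon
  have hc : ∀ n : ℕ, ∃ C, IsClubIn C omega1 ∧ UM n α ∩ C = ∅ := by
    intro n
    have h' : ¬ ∀ C, IsClubIn C omega1 → (UM n α ∩ C).Nonempty := hcon n
    push_neg at h'
    obtain ⟨C, hC1, hC2⟩ := h'
    exact ⟨C, hC1, hC2⟩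
  choose Cf hCf1 hCf2 using hc
  set D : ℕ → Set Ordinal := fun n => Nat.rec (Ioo α omega1) (fun n _ => Cf n) n with hD
  have hDclub : IsClubIn (⋂ n, D n) omega1 :=
    isClubIn_iInter (fun n => by
      cases n with
      | zero => exact isClubIn_Ioo hα
      | succ n => exact hCf1 n)
  obtain ⟨β, hβ1, _⟩ := hDclub.2.2 0 omega1_pos
  have hβIoo : β ∈ Ioo α omega1 := mem_iInter.mp hβ1 0
  have hβC : β ∈ Cf (Ffun β α) := mem_iInter.mp hβ1 (Ffun β α + 1)
  have hβUM : β ∈ UM (Ffun β α) α := ⟨hβIoo.1, hβIoo.2, rfl⟩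
  have := hCf2 (Ffun β α)
  rw [Set.eq_empty_iff_forall_notMem] at this
  exact this β ⟨hβUM, hβC⟩

lemma lift_aleph_one : Cardinal.lift.{v, u} ℵ₁ = ℵ₁ := by
  rw [← Cardinal.succ_aleph0, Cardinal.lift_succ, Cardinal.lift_aleph0, Cardinal.succ_aleph0]

lemma mk_Iio_omega1 : #(Iio omega1 : Set Ordinal) = ℵ₁ := by
  rw [omega1, Ordinal.mk_Iio_ordinal, Cardinal.card_ord, ← Cardinal.succ_aleph0,
    Cardinal.lift_succ, Cardinal.lift_aleph0]
  exact Cardinal.succ_aleph0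

lemma exists_big_fiber (g : Ordinal → ℕ) :
    ∃ n : ℕ, #({α ∈ Iio omega1 | g α = n} : Set Ordinal) = #(Iio omega1 : Set Ordinal) := by
  by_contra hcon
  push_neg at hcon
  have hle : ∀ n : ℕ, #({α ∈ Iio omega1 | g α = n} : Set Ordinal) ≤ ℵ₀ := by
    intro n
    have h1 : #({α ∈ Iio omega1 | g α = n} : Set Ordinal) ≤ #(Iio omega1 : Set Ordinal) :=
      Cardinal.mk_le_mk_of_subset (sep_subset _ _)
    have h2 : #({α ∈ Iio omega1 | g α = n} : Set Ordinal) < ℵ₁ := by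
      rw [← mk_Iio_omega1]
      exact lt_of_le_of_ne h1 (hcon n)
    rwa [← Cardinal.succ_aleph0, Order.lt_succ_iff] at h2
  have hcover : (Iio omega1 : Set Ordinal) =
      ⋃ n : ULift.{u_1 + 1} ℕ, {α ∈ Iio omega1 | g α = n.down} := by
    ext x
    simp only [mem_iUnion, mem_sep_iff, mem_Iio]
    exact ⟨fun h => ⟨⟨g x⟩, h, rfl⟩, fun ⟨n, h, _⟩ => h⟩
  have hbig : #(Iio omega1 : Set Ordinal) ≤ ℵ₀ := by
    rw [hcover]
    calc #(⋃ n : ULift.{u_1 + 1} ℕ, {α ∈ Iio omega1 | g α = n.down})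
        ≤ #(ULift.{u_1 + 1} ℕ) * ⨆ n : ULift.{u_1 + 1} ℕ,
            #({α ∈ Iio omega1 | g α = n.down} : Set Ordinal) := Cardinal.mk_iUnion_le _
      _ ≤ ℵ₀ * ℵ₀ := by
          apply mul_le_mul'
          · rw [Cardinal.mk_uLift, Cardinal.mk_nat, Cardinal.lift_aleph0]
          · exact ciSup_le' fun n => hle n.down
      _ = ℵ₀ := Cardinal.aleph0_mul_aleph0
  rw [mk_Iio_omega1] at hbig
  exact absurd hbig (not_le.mpr aleph0_lt_aleph_one)

theorem stmt11 :
    ∃ T : Ordinal → Set Ordinal,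
      (∀ i < omega1, T i ⊆ Set.Iio omega1) ∧
      (∀ i < omega1, IsStatIn (T i) omega1) ∧
      (∀ i j, i < omega1 → j < omega1 → i ≠ j → Disjoint (T i) (T j)) ∧
      (⋃ i ∈ Set.Iio omega1, T i) = Set.Iio omega1 := by
  classical
  have hsel : ∀ α : Ordinal, ∃ n : ℕ, α < omega1 → IsStatIn (UM n α) omega1 := by
    intro α
    by_cases h : α < omega1
    · obtain ⟨n, hn⟩ := exists_stat_row h
      exact ⟨n, fun _ => hn⟩
    · exact ⟨0, fun h' => absurd h' h⟩
  choose nsel hnsel using hsel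
  obtain ⟨n₀, hn₀⟩ := exists_big_fiber nsel
  have hmkS : #({α ∈ Iio omega1 | nsel α = n₀} : Set Ordinal) = ℵ₁ := by
    rw [hn₀, mk_Iio_omega1]
  have hlift : Cardinal.lift.{u_2 + 1} #(Iio (omega1 : Ordinal.{u_1}) : Set Ordinal.{u_1}) =
      Cardinal.lift.{u_1 + 1} #({α ∈ Iio omega1 | nsel α = n₀} : Set Ordinal.{u_2}) := by
    rw [hmkS, mk_Iio_omega1, lift_aleph_one, lift_aleph_one]
  obtain ⟨e⟩ : Nonempty ((Iio (omega1 : Ordinal.{u_1}) : Set Ordinal.{u_1}) ≃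
      ({α ∈ Iio omega1 | nsel α = n₀} : Set Ordinal.{u_2})) := Cardinal.lift_mk_eq'.mp hlift
  set base : Ordinal → Set Ordinal := fun i =>
    if h : i < omega1 then UM n₀ ((e ⟨i, h⟩ : ({α ∈ Iio omega1 | nsel α = n₀} : Set Ordinal))
      : Ordinal) else ∅ with hbase
  set R : Set Ordinal := Iio omega1 \ ⋃ j ∈ Iio omega1, base j with hR
  have hUMsub : ∀ n α, UM n α ⊆ Iio omega1 := fun n α β hβ => hβ.2.1
  have hbasesub : ∀ i, base i ⊆ Iio omega1 := by
    intro i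
    rw [hbase]
    dsimp only
    split
    · exact hUMsub _ _
    · exact empty_subset _
  have hbasestat : ∀ i, i < omega1 → IsStatIn (base i) omega1 := by
    intro i hi
    have hmem := (e ⟨i, hi⟩).2
    obtain ⟨hm1, hm2⟩ := hmem
    have := hnsel ((e ⟨i, hi⟩ : ({α ∈ Iio omega1 | nsel α = n₀} : Set Ordinal)) : Ordinal) hm1
    rw [hm2] at this
    rw [hbase]
    dsimp only
    rwa [dif_pos hi]
  have hbasedisj : ∀ i j, i ≠ j → ∀ x, x ∈ base i → x ∈ base j → False := by
    intro i j hij x hxi hxj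
    rw [hbase] at hxi hxj
    dsimp only at hxi hxj
    by_cases hi : i < omega1
    · by_cases hj : j < omega1
      · rw [dif_pos hi] at hxi
        rw [dif_pos hj] at hxj
        have hne : ((e ⟨i, hi⟩ : ({α ∈ Iio omega1 | nsel α = n₀} : Set Ordinal)) : Ordinal) ≠
            ((e ⟨j, hj⟩ : ({α ∈ Iio omega1 | nsel α = n₀} : Set Ordinal)) : Ordinal) := by
          intro heq
          apply hij
          have : e ⟨i, hi⟩ = e ⟨j, hj⟩ := Subtype.ext heq
          have := e.injective this
          exact congrArg Subtype.val this
        exact Set.disjoint_left.mp (UM_disjoint hne) hxi hxj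
      · rw [dif_neg hj] at hxj; exact hxj
    · rw [dif_neg hi] at hxi; exact hxi
  have hRdisj : ∀ j, j < omega1 → ∀ x, x ∈ R → x ∈ base j → False := by
    intro j hj x hxR hxj
    exact hxR.2 (mem_biUnion hj hxj)
  refine ⟨fun i => base i ∪ (if i = 0 then R else ∅), ?_, ?_, ?_, ?_⟩
  · intro i _
    apply union_subset (hbasesub i)
    split
    · exact diff_subset
    · exact empty_subset _
  · intro i hi
    exact isStatIn_mono subset_union_left (hbasestat i hi)
  · intro i j hi hj hij
    rw [Set.disjoint_left]
    intro x hxi hxj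
    rcases hxi with hxi | hxi <;> rcases hxj with hxj | hxj
    · exact hbasedisj i j hij x hxi hxj
    · rw [if_pos] at hxj
      · exact hRdisj i hi x hxj hxi
      · by_contra h; rw [if_neg h] at hxj; exact hxj
    · rw [if_pos] at hxi
      · exact hRdisj j hj x hxi hxj
      · by_contra h; rw [if_neg h] at hxi; exact hxi
    · have h0i : i = 0 := by by_contra h; rw [if_neg h] at hxi; exact hxi
      have h0j : j = 0 := by by_contra h; rw [if_neg h] at hxj; exact hxj
      exact hij (h0i.trans h0j.symm)
  · ext x
    simp only [mem_iUnion, mem_union, mem_Iio, exists_prop]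
    constructor
    · rintro ⟨i, hi, hx | hx⟩
      · exact hbasesub i hx
      · split at hx
        · exact hx.1
        · exact absurd hx (notMem_empty x)
    · intro hx
      by_cases hmem : x ∈ ⋃ j ∈ Iio omega1, base j
      · obtain ⟨j, hj, hxj⟩ := mem_iUnion₂.mp hmem
        exact ⟨j, hj, Or.inl hxj⟩
      · refine ⟨0, omega1_pos, Or.inr ?_⟩
        rw [if_pos rfl]
        exact ⟨hx, hmem⟩
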